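/- Let D ⊂ ℂ be a compact set with positive Lebesgue measure, V : ℂ → ℝ continuous, and let μ be the equilibrium measure for V on D. Define E(z) = V(z) + 2∫ log|z−ζ|⁻¹ dμ(ζ) and E₀ = ∫ E(z) dμ(z). Then E(z) = E₀ for μ-almost every z. -/

import Mathlib

open MeasureTheory Complex Metric
open scoped ENNReal

/-- The (weighted logarithmic) energy `I(μ) = ∫ V dμ + ∬ log|z-ζ|⁻¹ dμ(ζ)dμ(z)`,
with values in `EReal` so that measures whose logarithmic energy diverges get energy `⊤`. -/
noncomputable def energyE (V : ℂ → ℝ) (μ : Measure ℂ) : EReal :=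
  ((∫ z, V z ∂μ : ℝ) : EReal) +
    ((∫⁻ p : ℂ × ℂ, ENNReal.ofReal (Real.log ‖p.1 - p.2‖⁻¹) ∂(μ.prod μ) : ℝ≥0∞) : EReal) -
    ((∫ p : ℂ × ℂ, max (Real.log ‖p.1 - p.2‖) 0 ∂(μ.prod μ) : ℝ) : EReal)

/-- Borel probability measures supported in `D` having no point masses. -/
def AdmissibleOn (D : Set ℂ) (μ : Measure ℂ) : Prop :=
  IsProbabilityMeasure μ ∧ μ Dᶜ = 0 ∧ ∀ z : ℂ, μ {z} = 0

/-- `I₀`, the infimum of the energy over admissible measures. -/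
noncomputable def equilibriumValue (D : Set ℂ) (V : ℂ → ℝ) : EReal :=
  ⨅ ν ∈ {ν : Measure ℂ | AdmissibleOn D ν}, energyE V ν

/-- An equilibrium measure for `V` on `D`: an admissible measure realizing `I₀`. -/
def IsEquilibriumOn (D : Set ℂ) (V : ℂ → ℝ) (μ : Measure ℂ) : Prop :=
  AdmissibleOn D μ ∧ energyE V μ = equilibriumValue D V

/-- The effective potential `E(z) = V(z) + 2 ∫ log|z-ζ|⁻¹ dμ(ζ)`. -/
noncomputable def effPotential (V : ℂ → ℝ) (μ : Measure ℂ) (z : ℂ) : ℝ :=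
  V z + 2 * ∫ ζ, Real.log ‖z - ζ‖⁻¹ ∂μ

/-! The logarithmic kernel is integrable near the diagonal in the plane, so normalized Lebesgue
measure on `D` has finite energy, and hence so does the minimizer `μ`. If `ν` is admissible and
`ν ≤ c • μ`, the mixtures `(1 - t) μ + t ν` are admissible and their energy is a quadratic
polynomial in `t` with linear coefficient `∫ E dν - ∫ E dμ`; minimality at `t = 0` makes this
coefficient nonnegative. Taking for `ν` the measure `μ` conditioned on a set `s` gives
`∫_s E dμ ≥ μ(s) E₀` for all `s`, so `E ≥ E₀` a.e., and since `E` has mean `E₀`, `E = E₀` a.e. -/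

open ProbabilityTheory Topology
open scoped NNReal

lemma nonneg_of_forall_mul_add_mul_sq_nonneg {a b : ℝ}
    (h : ∀ t : ℝ, 0 < t → t < 1 → 0 ≤ t * a + t ^ 2 * b) : 0 ≤ a := by
  have hlim : Filter.Tendsto (fun t => a + t * b) (𝓝[>] 0) (𝓝 a) := by
    have : Continuous fun t : ℝ => a + t * b := by fun_prop
    simpa using (this.tendsto 0).mono_left nhdsWithin_le_nhds
  refine ge_of_tendsto hlim ?_
  filter_upwards [Ioo_mem_nhdsGT one_pos] with t ⟨ht₀, ht₁⟩
  have := h t ht₀ ht₁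
  exact nonneg_of_mul_nonneg_right (by linarith) ht₀

lemma ae_eq_integral_of_integral_le_integral_cond {α : Type*} [MeasurableSpace α]
    {μ : Measure α} [IsProbabilityMeasure μ] {f : α → ℝ} (hf : Integrable f μ)
    (h : ∀ s, MeasurableSet s → μ s ≠ 0 → ∫ x, f x ∂μ ≤ ∫ x, f x ∂μ[|s]) :
    ∀ᵐ x ∂μ, f x = ∫ y, f y ∂μ := by
  set c := ∫ y, f y ∂μ
  have hle : (fun _ => c) ≤ᵐ[μ] f := by
    refine ae_le_of_forall_setIntegral_le (integrable_const c) hf fun s hs _ => ?_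
    rcases eq_or_ne (μ s) 0 with h0 | h0
    · simp [Measure.restrict_eq_zero.2 h0]
    have hpos : 0 < μ.real s := ENNReal.toReal_pos h0 (measure_ne_top μ s)
    have := h s hs h0
    rw [ProbabilityTheory.cond, integral_smul_measure, ENNReal.toReal_inv, smul_eq_mul,
      ← measureReal_def, le_inv_mul_iff₀ hpos] at this
    rwa [setIntegral_const, smul_eq_mul]
  have := (integral_eq_iff_of_ae_le (integrable_const c) hf hle).1 (by simp [c])
  filter_upwards [this] with x hx using hx.symm

section MeasureAlgebra

variable {α β : Type*} [MeasurableSpace α] [MeasurableSpace β]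

lemma integrable_prod_of_le_smul {f : α × β → ℝ} {μ σ : Measure α} {ν τ : Measure β} [SFinite ν]
    [SFinite τ] (hf : Integrable f (μ.prod ν)) {c d : ℝ≥0∞} (hc : c ≠ ⊤) (hd : d ≠ ⊤)
    (hσ : σ ≤ c • μ) (hτ : τ ≤ d • ν) : Integrable f (σ.prod τ) := by
  refine (hf.smul_measure (ENNReal.mul_ne_top hc hd)).mono_measure ?_
  calc σ.prod τ ≤ (c • μ).prod (d • ν) := Measure.prod_mono hσ hτ
    _ = (c * d) • μ.prod ν := by rw [Measure.prod_smul_left, Measure.prod_smul_right, smul_smul]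

lemma integral_smul_add_smul_measure {f : α → ℝ} {μ ν : Measure α} (hμ : Integrable f μ)
    (hν : Integrable f ν) {a b : ℝ} (ha : 0 ≤ a) (hb : 0 ≤ b) :
    ∫ x, f x ∂(ENNReal.ofReal a • μ + ENNReal.ofReal b • ν) =
      a * ∫ x, f x ∂μ + b * ∫ x, f x ∂ν := by
  rw [integral_add_measure (hμ.smul_measure ENNReal.ofReal_ne_top)
    (hν.smul_measure ENNReal.ofReal_ne_top), integral_smul_measure, integral_smul_measure,
    ENNReal.toReal_ofReal ha, ENNReal.toReal_ofReal hb, smul_eq_mul, smul_eq_mul]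

lemma integral_prod_smul_add_smul_self {f : α × α → ℝ} {μ ν : Measure α} [SFinite μ] [SFinite ν]
    (hμμ : Integrable f (μ.prod μ)) (hμν : Integrable f (μ.prod ν))
    (hνμ : Integrable f (ν.prod μ)) (hνν : Integrable f (ν.prod ν)) {a b : ℝ} (ha : 0 ≤ a)
    (hb : 0 ≤ b) :
    ∫ p, f p ∂((ENNReal.ofReal a • μ + ENNReal.ofReal b • ν).prod
        (ENNReal.ofReal a • μ + ENNReal.ofReal b • ν)) =
      a * (a * ∫ p, f p ∂(μ.prod μ) + b * ∫ p, f p ∂(ν.prod μ)) +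
        b * (a * ∫ p, f p ∂(μ.prod ν) + b * ∫ p, f p ∂(ν.prod ν)) := by
  have hsmul {ρ : Measure (α × α)} (h : Integrable f ρ) (c : ℝ) :
      Integrable f (ENNReal.ofReal c • ρ) := h.smul_measure ENNReal.ofReal_ne_top
  simp only [Measure.add_prod, Measure.prod_add, Measure.prod_smul_left, Measure.prod_smul_right]
  rw [integral_smul_add_smul_measure ((hsmul hμμ a).add_measure (hsmul hνμ b))
    ((hsmul hμν a).add_measure (hsmul hνν b)) ha hb, integral_smul_add_smul_measure hμμ hνμ ha hb,
    integral_smul_add_smul_measure hμν hνν ha hb]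

end MeasureAlgebra

lemma Continuous.integrable_of_measure_compl_eq_zero {X : Type*} [TopologicalSpace X]
    [T2Space X] [MeasurableSpace X] [OpensMeasurableSpace X] {f : X → ℝ} (hf : Continuous f)
    {K : Set X} (hK : IsCompact K) {μ : Measure X} [IsFiniteMeasure μ] (hμ : μ Kᶜ = 0) :
    Integrable f μ := by
  simpa [IntegrableOn, Measure.restrict_eq_self_of_ae_mem (μ := μ) (s := K) hμ] using
    hf.continuousOn.integrableOn_compact (μ := μ) hK

noncomputable def logKernel (p : ℂ × ℂ) : ℝ := Real.log ‖p.1 - p.2‖⁻¹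

lemma measurable_logKernel : Measurable logKernel :=
  (measurable_fst.sub measurable_snd).norm.inv.log

lemma logKernel_swap (p : ℂ × ℂ) : logKernel p.swap = logKernel p := by
  simp [logKernel, norm_sub_rev p.1 p.2]

lemma integral_logKernel_prod_comm (μ ν : Measure ℂ) [SFinite μ] [SFinite ν] :
    ∫ p, logKernel p ∂(ν.prod μ) = ∫ p, logKernel p ∂(μ.prod ν) := by
  simpa only [logKernel_swap] using integral_prod_swap (μ := μ) (ν := ν) logKernel

lemma neg_logKernel_le_diam {D : Set ℂ} (hD : Bornology.IsBounded D) {z w : ℂ} (hz : z ∈ D)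
    (hw : w ∈ D) : -logKernel (z, w) ≤ diam D := by
  rw [logKernel, Real.log_inv, neg_neg, ← dist_eq]
  exact (Real.log_le_self dist_nonneg).trans (dist_le_diam_of_mem hD hz hw)

lemma max_neg_log_le_inv {x : ℝ} (hx : 0 ≤ x) : max (-Real.log x) 0 ≤ x⁻¹ := by
  rcases hx.eq_or_lt with rfl | hx
  · simp
  refine max_le ?_ (inv_nonneg.2 hx.le)
  rw [← Real.log_inv]
  linarith [Real.log_le_sub_one_of_pos (inv_pos.2 hx)]

lemma lintegral_ofReal_neg_log_norm_lt_top :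
    ∫⁻ u : ℂ, ENNReal.ofReal (-Real.log ‖u‖) < ⊤ := by
  set f : ℂ → ℝ := fun u => max (-Real.log ‖u‖) 0
  have hsupp : Function.support f ⊆ ball 0 1 := by
    intro u hu
    by_contra hu'
    refine hu (max_eq_right ?_)
    rw [neg_nonpos]
    exact Real.log_nonneg (by simpa using hu')
  have hball : IntegrableOn f (ball 0 1) := by
    refine integrableOn_ball_of_norm_le_rpow (C := 1) (α := 1) (by simp) (by simp) ?_
      (measurable_norm.log.neg.max measurable_const).aestronglyMeasurable
    refine Filter.Eventually.of_forall fun u => ?_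
    rw [Real.norm_of_nonneg (le_max_right _ _), one_mul, Real.rpow_neg_one]
    exact max_neg_log_le_inv (norm_nonneg u)
  simpa [f] using ((integrableOn_iff_integrable_of_support_subset hsupp).1 hball).lintegral_lt_top

lemma lintegral_logKernel_restrict_volume_lt_top {D : Set ℂ} (hD : volume D ≠ ⊤) :
    ∫⁻ p, ENNReal.ofReal (logKernel p) ∂((volume.restrict D).prod (volume.restrict D)) < ⊤ := by
  set C := ∫⁻ u : ℂ, ENNReal.ofReal (-Real.log ‖u‖)
  have hinner (z : ℂ) : ∫⁻ w, ENNReal.ofReal (logKernel (z, w)) ∂(volume.restrict D) ≤ C :=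
    calc ∫⁻ w, ENNReal.ofReal (logKernel (z, w)) ∂(volume.restrict D)
        ≤ ∫⁻ w, ENNReal.ofReal (-Real.log ‖w - z‖) :=
          lintegral_mono' Measure.restrict_le_self fun w => by
            simp only [logKernel, Real.log_inv, norm_sub_rev z w, le_refl]
      _ = C := lintegral_sub_right_eq_self (fun u => ENNReal.ofReal (-Real.log ‖u‖)) z
  calc ∫⁻ p, ENNReal.ofReal (logKernel p) ∂((volume.restrict D).prod (volume.restrict D))
      = ∫⁻ z, ∫⁻ w, ENNReal.ofReal (logKernel (z, w)) ∂(volume.restrict D) ∂(volume.restrict D) :=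
        lintegral_prod _ measurable_logKernel.ennreal_ofReal.aemeasurable
    _ ≤ ∫⁻ _, C ∂(volume.restrict D) := lintegral_mono hinner
    _ = C * volume D := by rw [lintegral_const, Measure.restrict_apply_univ]
    _ < ⊤ := ENNReal.mul_lt_top lintegral_ofReal_neg_log_norm_lt_top hD.lt_top

lemma integrable_logKernel_of_lintegral_ne_top {D : Set ℂ} (hD : Bornology.IsBounded D)
    {σ τ : Measure ℂ} [IsFiniteMeasure σ] [IsFiniteMeasure τ] (hσ : σ Dᶜ = 0) (hτ : τ Dᶜ = 0)
    (h : ∫⁻ p, ENNReal.ofReal (logKernel p) ∂(σ.prod τ) ≠ ⊤) :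
    Integrable logKernel (σ.prod τ) := by
  have hpos : Integrable (fun p => (ENNReal.ofReal (logKernel p)).toReal) (σ.prod τ) :=
    integrable_toReal_of_lintegral_ne_top measurable_logKernel.ennreal_ofReal.aemeasurable h
  have hmem : ∀ᵐ p ∂(σ.prod τ), p.1 ∈ D ∧ p.2 ∈ D := by
    have hσ' : ∀ᵐ z ∂σ, z ∈ D := hσ
    have hτ' : ∀ᵐ w ∂τ, w ∈ D := hτ
    exact (Measure.quasiMeasurePreserving_fst.ae hσ').and
      (Measure.quasiMeasurePreserving_snd.ae hτ')
  refine (hpos.add (integrable_const (diam D))).mono'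
    measurable_logKernel.aestronglyMeasurable ?_
  filter_upwards [hmem] with p ⟨hz, hw⟩
  have := neg_logKernel_le_diam hD hz hw
  rw [Pi.add_apply, ENNReal.toReal_ofReal', Real.norm_eq_abs, abs_le]
  constructor <;> linarith [le_max_left (logKernel p) 0, le_max_right (logKernel p) 0,
    diam_nonneg (s := D)]

lemma energyE_eq_logKernel (V : ℂ → ℝ) (μ : Measure ℂ) :
    energyE V μ = ((∫ z, V z ∂μ : ℝ) : EReal) +
      ((∫⁻ p, ENNReal.ofReal (logKernel p) ∂(μ.prod μ) : ℝ≥0∞) : EReal) -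
      ((∫ p, max (-logKernel p) 0 ∂(μ.prod μ) : ℝ) : EReal) := by
  simp only [energyE, logKernel, Real.log_inv, neg_neg]

lemma energyE_eq_top_of_lintegral_eq_top (V : ℂ → ℝ) {μ : Measure ℂ}
    (h : ∫⁻ p, ENNReal.ofReal (logKernel p) ∂(μ.prod μ) = ⊤) : energyE V μ = ⊤ := by
  rw [energyE_eq_logKernel, h, EReal.coe_ennreal_top,
    EReal.add_top_of_ne_bot (EReal.coe_ne_bot _), EReal.top_sub_coe]

lemma energyE_eq_of_integrable (V : ℂ → ℝ) {μ : Measure ℂ}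
    (h : Integrable logKernel (μ.prod μ)) :
    energyE V μ = ((∫ z, V z ∂μ + ∫ p, logKernel p ∂(μ.prod μ) : ℝ) : EReal) := by
  have hneg : ∫ p, max (-logKernel p) 0 ∂(μ.prod μ)
      = (∫⁻ p, ENNReal.ofReal (-logKernel p) ∂(μ.prod μ)).toReal := by
    rw [integral_eq_lintegral_of_nonneg_ae (f := fun p => max (-logKernel p) 0)
      (Filter.Eventually.of_forall fun _ => le_max_right _ _)
      (measurable_logKernel.neg.max measurable_const).aestronglyMeasurable]
    simp
  rw [energyE_eq_logKernel, hneg, integral_eq_lintegral_pos_part_sub_lintegral_neg_part h,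
    ← EReal.coe_ennreal_toReal h.lintegral_lt_top.ne]
  norm_cast
  ring

lemma AdmissibleOn.of_absolutelyContinuous {D : Set ℂ} {μ ν : Measure ℂ} (hμ : AdmissibleOn D μ)
    [IsProbabilityMeasure ν] (hνμ : ν ≪ μ) : AdmissibleOn D ν :=
  ⟨‹_›, hνμ hμ.2.1, fun z => hνμ (hμ.2.2 z)⟩

lemma admissibleOn_cond_volume {D : Set ℂ} (hD : IsCompact D) (hvol : 0 < volume D) :
    AdmissibleOn D volume[|D] :=
  ⟨cond_isProbabilityMeasure_of_finite hvol.ne' hD.measure_lt_top.ne,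
    by rw [cond_apply hD.measurableSet, Set.inter_compl_self, measure_empty, mul_zero],
    fun z => cond_absolutelyContinuous (measure_singleton z)⟩

lemma AdmissibleOn.mix {D : Set ℂ} {μ ν : Measure ℂ} (hμ : AdmissibleOn D μ)
    (hν : AdmissibleOn D ν) {t : ℝ} (ht₀ : 0 ≤ t) (ht₁ : t ≤ 1) :
    AdmissibleOn D (ENNReal.ofReal (1 - t) • μ + ENNReal.ofReal t • ν) := by
  obtain ⟨_, hμD, hμz⟩ := hμ
  obtain ⟨_, hνD, hνz⟩ := hν
  refine ⟨⟨?_⟩, ?_, fun z => ?_⟩ <;>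
    simp only [Measure.add_apply, Measure.smul_apply, smul_eq_mul, measure_univ, hμD, hνD,
      hμz, hνz, mul_one, mul_zero, add_zero]
  rw [← ENNReal.ofReal_add (by linarith) ht₀, sub_add_cancel, ENNReal.ofReal_one]

lemma IsEquilibriumOn.energyE_le {D : Set ℂ} {V : ℂ → ℝ} {μ ν : Measure ℂ}
    (hμ : IsEquilibriumOn D V μ) (hν : AdmissibleOn D ν) : energyE V μ ≤ energyE V ν :=
  hμ.2 ▸ iInf₂_le ν hν

lemma IsEquilibriumOn.integrable_logKernel {D : Set ℂ} {V : ℂ → ℝ} {μ : Measure ℂ}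
    (hD : IsCompact D) (hvol : 0 < volume D) (hμ : IsEquilibriumOn D V μ) :
    Integrable logKernel (μ.prod μ) := by
  have hleb := admissibleOn_cond_volume hD hvol
  have := hμ.1.1
  have := hleb.1
  have hlebfin : ∫⁻ p, ENNReal.ofReal (logKernel p) ∂(volume[|D].prod volume[|D]) ≠ ⊤ := by
    have hc : (volume D)⁻¹ ≠ ⊤ := ENNReal.inv_ne_top.2 hvol.ne'
    rw [ProbabilityTheory.cond, Measure.prod_smul_left, Measure.prod_smul_right,
      lintegral_smul_measure, lintegral_smul_measure]
    exact ENNReal.mul_ne_top hc <| ENNReal.mul_ne_top hc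
      (lintegral_logKernel_restrict_volume_lt_top hD.measure_lt_top.ne).ne
  refine integrable_logKernel_of_lintegral_ne_top hD.isBounded hμ.1.2.1 hμ.1.2.1 fun htop => ?_
  have h := hμ.energyE_le hleb
  rw [energyE_eq_top_of_lintegral_eq_top V htop, top_le_iff, energyE_eq_of_integrable V
    (integrable_logKernel_of_lintegral_ne_top hD.isBounded hleb.2.1 hleb.2.1 hlebfin)] at h
  exact EReal.coe_ne_top _ h

lemma integrable_effPotential {V : ℂ → ℝ} {μ σ : Measure ℂ} [SFinite μ] [SFinite σ]
    (hV : Integrable V σ) (hL : Integrable logKernel (σ.prod μ)) :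
    Integrable (effPotential V μ) σ :=
  hV.add (hL.integral_prod_left.const_mul 2)

lemma integral_effPotential {V : ℂ → ℝ} {μ σ : Measure ℂ} [SFinite μ] [SFinite σ]
    (hV : Integrable V σ) (hL : Integrable logKernel (σ.prod μ)) :
    ∫ z, effPotential V μ z ∂σ = ∫ z, V z ∂σ + 2 * ∫ p, logKernel p ∂(σ.prod μ) := by
  rw [integral_prod _ hL, ← integral_const_mul, ← integral_add hV
    (hL.integral_prod_left.const_mul 2)]
  rfl

lemma IsEquilibriumOn.integral_effPotential_le {D : Set ℂ} {V : ℂ → ℝ} {μ ν : Measure ℂ}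
    (hD : IsCompact D) (hV : Continuous V) (hμ : IsEquilibriumOn D V μ)
    (hint : Integrable logKernel (μ.prod μ)) (hν : AdmissibleOn D ν) {c : ℝ≥0∞} (hc : c ≠ ⊤)
    (hνμ : ν ≤ c • μ) :
    ∫ z, effPotential V μ z ∂μ ≤ ∫ z, effPotential V μ z ∂ν := by
  have := hμ.1.1
  have := hν.1
  have hμμ : μ ≤ (1 : ℝ≥0∞) • μ := (one_smul _ _).ge
  have hμν := integrable_prod_of_le_smul hint ENNReal.one_ne_top hc hμμ hνμ
  have hνμ' := integrable_prod_of_le_smul hint hc ENNReal.one_ne_top hνμ hμμ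
  have hνν := integrable_prod_of_le_smul hint hc hc hνμ hνμ
  have hVμ := hV.integrable_of_measure_compl_eq_zero hD hμ.1.2.1
  have hVν := (hVμ.smul_measure hc).mono_measure hνμ
  rw [integral_effPotential hVμ hint, integral_effPotential hVν hνμ',
    integral_logKernel_prod_comm μ ν]
  suffices ∀ t : ℝ, 0 < t → t < 1 → 0 ≤
      t * ((∫ z, V z ∂ν + 2 * ∫ p, logKernel p ∂(μ.prod ν)) -
        (∫ z, V z ∂μ + 2 * ∫ p, logKernel p ∂(μ.prod μ))) +
      t ^ 2 * (∫ p, logKernel p ∂(μ.prod μ) - 2 * ∫ p, logKernel p ∂(μ.prod ν) +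
        ∫ p, logKernel p ∂(ν.prod ν)) from
    sub_nonneg.1 (nonneg_of_forall_mul_add_mul_sq_nonneg this)
  intro t ht₀ ht₁
  set μt := ENNReal.ofReal (1 - t) • μ + ENNReal.ofReal t • ν
  have hμt : μt ≤ (ENNReal.ofReal (1 - t) + ENNReal.ofReal t * c) • μ := by
    rw [add_smul, mul_smul]
    exact add_le_add le_rfl (smul_le_smul_left _ hνμ)
  have hmin := hμ.energyE_le (hμ.1.mix hν ht₀.le ht₁.le)
  rw [energyE_eq_of_integrable V hint, energyE_eq_of_integrable V
      (integrable_prod_of_le_smul hint (by finiteness) (by finiteness) hμt hμt),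
    EReal.coe_le_coe_iff, integral_smul_add_smul_measure hVμ hVν (by linarith) ht₀.le,
    integral_prod_smul_add_smul_self hint hμν hνμ' hνν (by linarith) ht₀.le,
    integral_logKernel_prod_comm μ ν] at hmin
  linear_combination hmin

/-- The effective potential of the equilibrium measure is `μ`-a.e. equal to its mean
`E₀ = ∫ E dμ`. -/
theorem effPotential_ae_eq_const (D : Set ℂ) (hD : IsCompact D)
    (hvol : 0 < volume D) (V : ℂ → ℝ) (hV : Continuous V)
    (μ : Measure ℂ) (hμ : IsEquilibriumOn D V μ) :
    ∀ᵐ z ∂μ, effPotential V μ z = ∫ w, effPotential V μ w ∂μ := by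
  have := hμ.1.1
  have hint := hμ.integrable_logKernel hD hvol
  refine ae_eq_integral_of_integral_le_integral_cond (integrable_effPotential
    (hV.integrable_of_measure_compl_eq_zero hD hμ.1.2.1) hint) fun s _ hs => ?_
  have := cond_isProbabilityMeasure (μ := μ) hs
  refine hμ.integral_effPotential_le hD hV hint
    (hμ.1.of_absolutelyContinuous cond_absolutelyContinuous) (ENNReal.inv_ne_top.2 hs) ?_
  exact smul_le_smul_left _ Measure.restrict_le_self
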